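/- Let P_{X_1,Y_1}, ..., P_{X_m,Y_m} be joint PMFs on a finite product alphabet X × Y whose Y-marginals P_{Y_1},...,P_{Y_m} satisfy ∑_y max2{P_{Y_1}(y),...,P_{Y_m}(y)} ≤ 1. Then there exists a joint PMF on (X × Y)^m whose i-th (X,Y)-marginal equals P_{X_i,Y_i} for each i, and under which ∑_{y∈Y} P(∪_{i=1}^m {Y_i = y}) = ∑_{y∈Y} max{P_{Y_1}(y),...,P_{Y_m}(y)}. -/

import Mathlib

open Finset

def IsPMF {α : Type*} [Fintype α] (P : α → ℝ) : Prop :=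
  (∀ a, 0 ≤ P a) ∧ ∑ a, P a = 1

noncomputable def max2 {ι : Type*} [Fintype ι] (f : ι → ℝ) : ℝ :=
  ⨆ p : {p : ι × ι // p.1 ≠ p.2}, min (f p.val.1) (f p.val.2)

/-!
Let `n i y` be the `Y`-marginals, `c y` an index maximizing `n · y`, and `s y = max2 (n · y)`.
Since `∑ s ≤ 1` there is a core label `K : Option Y` with `P(K = some y) = s y`. Couple each `Yᵢ`
with `K` so that on `{K = some y}` it equals `y` with mass `n i y ≤ s y` (the whole block if
`i = c y`), while its remaining mass, which sits on values it is champion of, is spread over the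
rest independently. Glue these couplings conditionally independently given `K`, and draw `Xᵢ`
from `R i (· | Yᵢ)`. Then `Yᵢ = y` with `i ≠ c y` forces `K = some y`, hence `Y_{c y} = y`, so
`⋃ᵢ {Yᵢ = y} = {Y_{c y} = y}` has probability `maxᵢ n i y`.
-/

section Max2

variable {ι : Type*} [Fintype ι] {f : ι → ℝ}

lemma min_le_max2 {i j : ι} (h : i ≠ j) : min (f i) (f j) ≤ max2 f :=
  le_ciSup (f := fun p : {p : ι × ι // p.1 ≠ p.2} => min (f p.val.1) (f p.val.2))
    (Finite.bddAbove_range _) ⟨(i, j), h⟩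

lemma le_max2_of_le {i j : ι} (hij : i ≠ j) (h : f i ≤ f j) : f i ≤ max2 f := by
  simpa [min_eq_left h] using min_le_max2 (f := f) hij

lemma max2_le_of_forall_le {j : ι} (hj : 0 ≤ f j) (h : ∀ i, f i ≤ f j) : max2 f ≤ f j :=
  Real.iSup_le (fun _ => (min_le_left _ _).trans (h _)) hj

lemma max2_nonneg (hf : ∀ i, 0 ≤ f i) : 0 ≤ max2 f :=
  Real.iSup_nonneg fun _ => le_min (hf _) (hf _)

end Max2

section ProdCoupling

variable {α β : Type*} [Fintype β]

noncomputable def prodCoupling (φ : α → ℝ) (ψ : β → ℝ) (a : α) (b : β) : ℝ :=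
  φ a * ψ b / ∑ b', ψ b'

variable {φ : α → ℝ} {ψ : β → ℝ}

lemma prodCoupling_nonneg (hφ : ∀ a, 0 ≤ φ a) (hψ : ∀ b, 0 ≤ ψ b) (a : α) (b : β) :
    0 ≤ prodCoupling φ ψ a b :=
  div_nonneg (mul_nonneg (hφ a) (hψ b)) (sum_nonneg fun b _ => hψ b)

lemma sum_prodCoupling_right [Fintype α] (hφ : ∀ a, 0 ≤ φ a) (h : ∑ a, φ a = ∑ b, ψ b) (a : α) :
    ∑ b, prodCoupling φ ψ a b = φ a := by
  by_cases hψ : ∑ b, ψ b = 0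
  · have hφa : φ a = 0 := (sum_eq_zero_iff_of_nonneg fun a _ => hφ a).mp (h.trans hψ) a (mem_univ a)
    simp [prodCoupling, hφa]
  · simp only [prodCoupling, ← sum_div, ← mul_sum, mul_div_cancel_right₀ _ hψ]

lemma sum_prodCoupling_left [Fintype α] (hψ : ∀ b, 0 ≤ ψ b) (h : ∑ a, φ a = ∑ b, ψ b) (b : β) :
    ∑ a, prodCoupling φ ψ a b = ψ b := by
  by_cases hψ0 : ∑ b, ψ b = 0
  · have hψb : ψ b = 0 := (sum_eq_zero_iff_of_nonneg fun b _ => hψ b).mp hψ0 b (mem_univ b)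
    simp [prodCoupling, hψb]
  · simp only [prodCoupling, ← sum_div, ← sum_mul, h, mul_div_cancel_left₀ _ hψ0]

lemma ne_zero_of_prodCoupling_ne_zero {a : α} {b : β} (h : prodCoupling φ ψ a b ≠ 0) :
    φ a ≠ 0 :=
  left_ne_zero_of_mul (div_ne_zero_iff.mp h).1

end ProdCoupling

section Glue

variable {ι κ α : Type*} [Fintype ι] [Fintype κ]

lemma sum_ite_apply_eq_mul_prod_sum [Fintype α] [DecidableEq ι] [DecidableEq α] (h : ι → α → ℝ)
    (i : ι) (a : α) :
    ∑ f : ι → α, (if f i = a then ∏ j, h j (f j) else 0)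
      = h i a * ∏ j ∈ univ.erase i, ∑ b, h j b := by
  set h' : ι → α → ℝ := fun j b => if j = i then (if b = a then h j b else 0) else h j b
  have hpt : ∀ f : ι → α, (if f i = a then ∏ j, h j (f j) else 0) = ∏ j, h' j (f j) := by
    intro f
    rw [← mul_prod_erase univ _ (mem_univ i), ← mul_prod_erase univ (fun j => h' j (f j))
      (mem_univ i), prod_congr rfl fun j hj => if_neg (ne_of_mem_erase hj)]
    split_ifs <;> simp [h', *]
  rw [sum_congr rfl fun f _ => hpt f, ← Fintype.prod_sum, ← mul_prod_erase univ _ (mem_univ i),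
    prod_congr rfl fun j hj => sum_congr rfl fun b _ => if_neg (ne_of_mem_erase hj)]
  simp [h']

/-- The law of `(f i)ᵢ` when `k ∼ p` and, given `k`, the coordinates are independent with
`(k, f i) ∼ T i`. -/
noncomputable def glue (p : κ → ℝ) (T : ι → κ → α → ℝ) (f : ι → α) : ℝ :=
  ∑ k, p k * ∏ i, (T i k (f i) / p k)

variable {p : κ → ℝ} {T : ι → κ → α → ℝ}

lemma glue_nonneg (hp : ∀ k, 0 ≤ p k) (hT : ∀ i k a, 0 ≤ T i k a) (f : ι → α) :
    0 ≤ glue p T f :=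
  sum_nonneg fun k _ => mul_nonneg (hp k) (prod_nonneg fun i _ => div_nonneg (hT i k _) (hp k))

lemma exists_forall_ne_zero_of_glue_ne_zero {f : ι → α} (hf : glue p T f ≠ 0) :
    ∃ k, ∀ i, T i k (f i) ≠ 0 := by
  obtain ⟨k, -, hk⟩ := exists_ne_zero_of_sum_ne_zero hf
  exact ⟨k, fun i =>
    left_ne_zero_of_mul ((prod_ne_zero_iff.mp (right_ne_zero_of_mul hk)) i (mem_univ i))⟩

lemma sum_ite_glue [Fintype α] [DecidableEq ι] [DecidableEq α] (hT : ∀ i k a, 0 ≤ T i k a)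
    (hrow : ∀ i k, ∑ a, T i k a = p k) (i : ι) (a : α) :
    ∑ f, (if f i = a then glue p T f else 0) = ∑ k, T i k a := by
  have hpt : ∀ f : ι → α, (if f i = a then glue p T f else 0)
      = ∑ k, p k * (if f i = a then ∏ j, (T j k (f j) / p k) else 0) := by
    intro f
    split_ifs <;> simp [glue]
  rw [sum_congr rfl fun f _ => hpt f, sum_comm]
  refine sum_congr rfl fun k _ => ?_
  rw [← mul_sum, sum_ite_apply_eq_mul_prod_sum (fun j b => T j k b / p k)]
  by_cases hpk : p k = 0
  · have hTk : T i k a = 0 :=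
      (sum_eq_zero_iff_of_nonneg fun b _ => hT i k b).mp ((hrow i k).trans hpk) a (mem_univ a)
    simp [hpk, hTk]
  · have hone : ∀ j, ∑ b, T j k b / p k = 1 := fun j => by
      rw [← sum_div, hrow j k, div_self hpk]
    simp only [hone, prod_const_one, mul_one]
    field_simp

lemma isPMF_glue [Fintype α] [Nonempty ι] [DecidableEq ι] [DecidableEq α] (hp : ∀ k, 0 ≤ p k)
    (hp1 : ∑ k, p k = 1) (hT : ∀ i k a, 0 ≤ T i k a) (hrow : ∀ i k, ∑ a, T i k a = p k) :
    IsPMF (glue p T) := by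
  refine ⟨glue_nonneg hp hT, ?_⟩
  obtain ⟨i⟩ := ‹Nonempty ι›
  calc ∑ f, glue p T f = ∑ a, ∑ f, (if f i = a then glue p T f else 0) := by
        simp_rw [← sum_filter, sum_fiberwise]
    _ = ∑ k, ∑ a, T i k a := by simp_rw [sum_ite_glue hT hrow, sum_comm (γ := α)]
    _ = 1 := by simp_rw [hrow, hp1]

end Glue

section CoreCoupling

variable {ι Y : Type*} [Fintype ι] {n : ι → Y → ℝ}

section

variable [Fintype Y]

noncomputable def coreWeight (n : ι → Y → ℝ) : Option Y → ℝ
  | some y => max2 (n · y)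
  | none => 1 - ∑ y, max2 (n · y)

lemma coreWeight_nonneg (hn : ∀ i y, 0 ≤ n i y) (hs : ∑ y, max2 (n · y) ≤ 1) :
    ∀ k, 0 ≤ coreWeight n k
  | some y => max2_nonneg fun i => hn i y
  | none => sub_nonneg.mpr hs

lemma sum_coreWeight : ∑ k, coreWeight n k = 1 := by
  simp [Fintype.sum_option, coreWeight]

end

variable [DecidableEq ι] {c : Y → ι}

noncomputable def excess (n : ι → Y → ℝ) (c : Y → ι) (i : ι) (y : Y) : ℝ :=
  if c y = i then n i y - max2 (n · y) else 0

lemma excess_nonneg (hn : ∀ i y, 0 ≤ n i y) (hc : ∀ y i, n i y ≤ n (c y) y) (i : ι) (y : Y) :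
    0 ≤ excess n c i y := by
  by_cases hci : c y = i
  · subst hci
    simpa [excess] using max2_le_of_forall_le (f := (n · y)) (hn (c y) y) (hc y)
  · simp [excess, hci]

variable [Fintype Y]

noncomputable def slack (n : ι → Y → ℝ) (c : Y → ι) (i : ι) : Option Y → ℝ
  | some y => if c y = i then 0 else max2 (n · y) - n i y
  | none => 1 - ∑ y, max2 (n · y)

lemma slack_nonneg (hc : ∀ y i, n i y ≤ n (c y) y) (hs : ∑ y, max2 (n · y) ≤ 1) (i : ι) :
    ∀ k, 0 ≤ slack n c i k
  | some y => by
    by_cases hci : c y = i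
    · simp [slack, hci]
    · simpa [slack, hci] using le_max2_of_le (f := (n · y)) (Ne.symm hci) (hc y i)
  | none => sub_nonneg.mpr hs

lemma sum_slack_eq_sum_excess (hn1 : ∀ i, ∑ y, n i y = 1) (i : ι) :
    ∑ k, slack n c i k = ∑ y, excess n c i y := by
  have hpt : ∀ y, slack n c i (some y) = excess n c i y + (max2 (n · y) - n i y) := by
    intro y
    by_cases hci : c y = i <;> simp [slack, excess, hci]
  rw [Fintype.sum_option, Fintype.sum_congr _ _ hpt, sum_add_distrib, sum_sub_distrib, hn1]
  simp only [slack]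
  ring

variable [DecidableEq Y]

/-- Coordinate `i` fills the core block `some y` with mass `n i y` (all of it when `c y = i`); the
rest of its mass lies on the values it is champion of and is spread independently over its slack. -/
noncomputable def coreCoupling (n : ι → Y → ℝ) (c : Y → ι) (i : ι) (k : Option Y) (y : Y) :
    ℝ :=
  (if k = some y then (if c y = i then max2 (n · y) else n i y) else 0)
    + prodCoupling (slack n c i) (excess n c i) k y

lemma coreCoupling_nonneg (hn : ∀ i y, 0 ≤ n i y) (hc : ∀ y i, n i y ≤ n (c y) y)
    (hs : ∑ y, max2 (n · y) ≤ 1) (i : ι) (k : Option Y) (y : Y) : 0 ≤ coreCoupling n c i k y := by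
  refine add_nonneg ?_ (prodCoupling_nonneg (slack_nonneg hc hs i) (excess_nonneg hn hc i) k y)
  split_ifs
  exacts [max2_nonneg fun j => hn j y, hn i y, le_rfl]

lemma sum_coreCoupling_right (hn1 : ∀ i, ∑ y, n i y = 1)
    (hc : ∀ y i, n i y ≤ n (c y) y) (hs : ∑ y, max2 (n · y) ≤ 1) (i : ι) (k : Option Y) :
    ∑ y, coreCoupling n c i k y = coreWeight n k := by
  simp only [coreCoupling]
  rw [sum_add_distrib,
    sum_prodCoupling_right (slack_nonneg hc hs i) (sum_slack_eq_sum_excess hn1 i)]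
  cases k with
  | none => simp [slack, coreWeight]
  | some y₀ =>
    by_cases hci : c y₀ = i <;> simp [slack, coreWeight, hci]

lemma sum_coreCoupling_left (hn : ∀ i y, 0 ≤ n i y) (hn1 : ∀ i, ∑ y, n i y = 1)
    (hc : ∀ y i, n i y ≤ n (c y) y) (i : ι) (y : Y) :
    ∑ k, coreCoupling n c i k y = n i y := by
  simp only [coreCoupling]
  rw [sum_add_distrib,
    sum_prodCoupling_left (excess_nonneg hn hc i) (sum_slack_eq_sum_excess hn1 i), sum_ite_eq']
  by_cases hci : c y = i <;> simp [excess, hci]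

lemma coreCoupling_champion_eq {i : ι} {k : Option Y} {y y' : Y} (hi : c y ≠ i)
    (h : coreCoupling n c i k y ≠ 0) (h' : coreCoupling n c (c y) k y' ≠ 0) : y' = y := by
  have hk : k = some y := by
    by_contra hk
    simp [coreCoupling, hk, prodCoupling, excess, hi] at h
  subst hk
  by_contra hy
  simp [coreCoupling, Ne.symm hy, prodCoupling, slack] at h'

end CoreCoupling

section Lift

variable {κ X Y : Type*} [Fintype X]

def sndMarginal (R : X × Y → ℝ) (y : Y) : ℝ :=
  ∑ x, R (x, y)

lemma isPMF_sndMarginal [Fintype Y] {R : X × Y → ℝ} (hR : IsPMF R) : IsPMF (sndMarginal R) :=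
  ⟨fun y => sum_nonneg fun x _ => hR.1 (x, y), by rw [← hR.2, Fintype.sum_prod_type_right]; rfl⟩

lemma sum_ite_snd_eq {ι : Type*} [Fintype ι] [DecidableEq ι] [Fintype Y] [DecidableEq X]
    [DecidableEq Y] (Q : (ι → X × Y) → ℝ) (j : ι) (y : Y) :
    ∑ f, (if (f j).2 = y then Q f else 0) = ∑ x, ∑ f, (if f j = (x, y) then Q f else 0) := by
  rw [sum_comm]
  refine sum_congr rfl fun f _ => ?_
  by_cases hy : (f j).2 = y <;> simp [Prod.ext_iff, hy]

noncomputable def liftCoupling (T : κ → Y → ℝ) (R : X × Y → ℝ) (k : κ) (p : X × Y) : ℝ :=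
  prodCoupling (T · p.2) (fun x => R (x, p.2)) k p.1

variable {T : κ → Y → ℝ} {R : X × Y → ℝ}

lemma liftCoupling_nonneg (hT : ∀ k y, 0 ≤ T k y) (hR : ∀ p, 0 ≤ R p) (k : κ) (p : X × Y) :
    0 ≤ liftCoupling T R k p :=
  prodCoupling_nonneg (hT · p.2) (fun x => hR (x, p.2)) k p.1

lemma sum_liftCoupling_right [Fintype κ] [Fintype Y] (hT : ∀ k y, 0 ≤ T k y)
    (hTR : ∀ y, ∑ k, T k y = sndMarginal R y) (k : κ) :
    ∑ p, liftCoupling T R k p = ∑ y, T k y := by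
  rw [Fintype.sum_prod_type_right]
  exact sum_congr rfl fun y _ => sum_prodCoupling_right (hT · y) (hTR y) k

lemma sum_liftCoupling_left [Fintype κ] (hR : ∀ p, 0 ≤ R p)
    (hTR : ∀ y, ∑ k, T k y = sndMarginal R y) (p : X × Y) : ∑ k, liftCoupling T R k p = R p :=
  sum_prodCoupling_left (fun x => hR (x, p.2)) (hTR p.2) p.1

lemma ne_zero_of_liftCoupling_ne_zero {k : κ} {p : X × Y} (h : liftCoupling T R k p ≠ 0) :
    T k p.2 ≠ 0 :=
  ne_zero_of_prodCoupling_ne_zero (φ := (T · p.2)) h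

end Lift

section ChampionCoupling

variable {ι X Y : Type*} [Fintype ι] [DecidableEq ι] [Fintype X] [Fintype Y] [DecidableEq Y]

noncomputable def championKernel (R : ι → X × Y → ℝ) (c : Y → ι) (i : ι) :
    Option Y → X × Y → ℝ :=
  liftCoupling (coreCoupling (fun j => sndMarginal (R j)) c i) (R i)

noncomputable def championCoupling (R : ι → X × Y → ℝ) (c : Y → ι) : (ι → X × Y) → ℝ :=
  glue (coreWeight fun j => sndMarginal (R j)) (championKernel R c)

variable {R : ι → X × Y → ℝ} {c : Y → ι}

lemma championKernel_nonneg (hR : ∀ i, IsPMF (R i))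
    (hc : ∀ y i, sndMarginal (R i) y ≤ sndMarginal (R (c y)) y)
    (hs : ∑ y, max2 (fun i => sndMarginal (R i) y) ≤ 1) (i : ι) (k : Option Y) (p : X × Y) :
    0 ≤ championKernel R c i k p :=
  liftCoupling_nonneg (coreCoupling_nonneg (fun j => (isPMF_sndMarginal (hR j)).1) hc hs i)
    (hR i).1 k p

lemma sum_championKernel_right (hR : ∀ i, IsPMF (R i))
    (hc : ∀ y i, sndMarginal (R i) y ≤ sndMarginal (R (c y)) y)
    (hs : ∑ y, max2 (fun i => sndMarginal (R i) y) ≤ 1) (i : ι) (k : Option Y) :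
    ∑ p, championKernel R c i k p = coreWeight (fun j => sndMarginal (R j)) k := by
  have hn j := isPMF_sndMarginal (hR j)
  rw [championKernel, sum_liftCoupling_right (coreCoupling_nonneg (hn · |>.1) hc hs i)
    (sum_coreCoupling_left (hn · |>.1) (hn · |>.2) hc i), sum_coreCoupling_right (hn · |>.2) hc hs]

lemma sum_ite_championCoupling [DecidableEq X] (hR : ∀ i, IsPMF (R i))
    (hc : ∀ y i, sndMarginal (R i) y ≤ sndMarginal (R (c y)) y)
    (hs : ∑ y, max2 (fun i => sndMarginal (R i) y) ≤ 1) (i : ι) (p : X × Y) :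
    ∑ f, (if f i = p then championCoupling R c f else 0) = R i p := by
  have hn j := isPMF_sndMarginal (hR j)
  rw [championCoupling, sum_ite_glue (championKernel_nonneg hR hc hs)
    (sum_championKernel_right hR hc hs), championKernel,
    sum_liftCoupling_left (hR i).1 (sum_coreCoupling_left (hn · |>.1) (hn · |>.2) hc i)]

lemma isPMF_championCoupling [Nonempty ι] [DecidableEq X] (hR : ∀ i, IsPMF (R i))
    (hc : ∀ y i, sndMarginal (R i) y ≤ sndMarginal (R (c y)) y)
    (hs : ∑ y, max2 (fun i => sndMarginal (R i) y) ≤ 1) : IsPMF (championCoupling R c) :=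
  isPMF_glue (coreWeight_nonneg (fun j => (isPMF_sndMarginal (hR j)).1) hs) sum_coreWeight
    (championKernel_nonneg hR hc hs) (sum_championKernel_right hR hc hs)

lemma snd_apply_champion_of_championCoupling_ne_zero {f : ι → X × Y}
    (hf : championCoupling R c f ≠ 0) (i : ι) : (f (c (f i).2)).2 = (f i).2 := by
  obtain ⟨k, hk⟩ := exists_forall_ne_zero_of_glue_ne_zero hf
  by_cases hci : c (f i).2 = i
  · rw [hci]
  · exact coreCoupling_champion_eq hci (ne_zero_of_liftCoupling_ne_zero (hk i))
      (ne_zero_of_liftCoupling_ne_zero (hk _))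

lemma sum_ite_exists_snd_championCoupling (y : Y) :
    ∑ f, (if ∃ i, (f i).2 = y then championCoupling R c f else 0)
      = ∑ f, (if (f (c y)).2 = y then championCoupling R c f else 0) := by
  refine sum_congr rfl fun f _ => ?_
  by_cases hf : championCoupling R c f = 0
  · simp [hf]
  · exact if_congr ⟨fun ⟨i, hi⟩ => hi ▸ snd_apply_champion_of_championCoupling_ne_zero hf i,
      fun h => ⟨c y, h⟩⟩ rfl rfl

end ChampionCoupling

theorem stmt8 {ι X Y : Type*} [Fintype ι] [DecidableEq ι] [Fintype X] [Fintype Y] [Nonempty ι]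
    [DecidableEq X] [DecidableEq Y]
    (R : ι → X × Y → ℝ) (hR : ∀ i, IsPMF (R i))
    (h2 : ∑ y, max2 (fun i => ∑ x, R i (x, y)) ≤ 1) :
    ∃ Q : (ι → X × Y) → ℝ, IsPMF Q ∧
      (∀ i p, ∑ f : ι → X × Y, (if f i = p then Q f else 0) = R i p) ∧
      ∑ y, ∑ f : ι → X × Y, (if ∃ i, (f i).2 = y then Q f else 0)
        = ∑ y, ⨆ i, ∑ x, R i (x, y) := by
  choose c hc using fun y => Finite.exists_max fun i => sndMarginal (R i) y
  refine ⟨championCoupling R c, isPMF_championCoupling hR hc h2,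
    sum_ite_championCoupling hR hc h2, sum_congr rfl fun y _ => ?_⟩
  calc ∑ f, (if ∃ i, (f i).2 = y then championCoupling R c f else 0)
      = ∑ x, ∑ f, (if f (c y) = (x, y) then championCoupling R c f else 0) := by
        rw [sum_ite_exists_snd_championCoupling, sum_ite_snd_eq]
    _ = sndMarginal (R (c y)) y := sum_congr rfl fun x _ => sum_ite_championCoupling hR hc h2 _ _
    _ = ⨆ i, sndMarginal (R i) y :=
        le_antisymm (le_ciSup (f := fun i => sndMarginal (R i) y) (Finite.bddAbove_range _) _)
          (ciSup_le (hc y))
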